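/- Let N ≥ 1 be an integer and θ > 0. Then ∑_{i=1}^{N} ∑_{j=1}^{N} e^{−(θ/N)|i−j|} = (N·e^{−θ/N} − N·e^{θ/N} + 2 − 2·e^{−θ}) / ((1 − e^{θ/N})·(1 − e^{−θ/N})). -/

import Mathlib

/-! With `r = e^{-θ/N}` the summand is `r ^ |i - j|`. Bordering the `N × N` kernel matrix by a
new row and column adds `1 + 2 (r + r² + ⋯ + r^N)`, so induction on `N` and the geometric sum give
the closed form `(N - N r² - 2 r + 2 r^{N+1}) / (1 - r)²`, which is the stated expression after
multiplying numerator and denominator by `-r`. -/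

open Real Finset

theorem Finset.sum_Icc_one_eq_sum_range {M : Type*} [AddCommMonoid M] (f : ℕ → M) (N : ℕ) :
    ∑ i ∈ Icc 1 N, f i = ∑ i ∈ range N, f (i + 1) := by
  rw [← Finset.Ico_add_one_right_eq_Icc, sum_Ico_eq_sum_range, Nat.add_sub_cancel]
  simp only [add_comm]

theorem Finset.sum_range_sub_eq_sum_range_add_one {M : Type*} [AddCommMonoid M] (f : ℕ → M) (N : ℕ) :
    ∑ i ∈ range N, f (N - i) = ∑ i ∈ range N, f (i + 1) := by
  rw [← sum_range_reflect]
  refine sum_congr rfl fun i hi => congrArg f ?_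
  have := mem_range.mp hi
  omega

section PowNatAbsSub

variable {K : Type*} [Field K]

theorem sum_range_pow_natAbs_sub_right (r : K) (N : ℕ) :
    ∑ i ∈ range N, r ^ ((i : ℤ) - N).natAbs = r * ∑ i ∈ range N, r ^ i := by
  calc ∑ i ∈ range N, r ^ ((i : ℤ) - N).natAbs
      = ∑ i ∈ range N, r ^ (N - i) := sum_congr rfl fun i hi => by
        have := mem_range.mp hi
        congr 1
        omega
    _ = ∑ i ∈ range N, r ^ (i + 1) := sum_range_sub_eq_sum_range_add_one (r ^ ·) N
    _ = r * ∑ i ∈ range N, r ^ i := by simp_rw [mul_sum, pow_succ']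

theorem sum_range_pow_natAbs_sub_left (r : K) (N : ℕ) :
    ∑ j ∈ range N, r ^ ((N : ℤ) - j).natAbs = r * ∑ i ∈ range N, r ^ i := by
  simp_rw [← Int.natAbs_neg ((N : ℤ) - _), neg_sub]
  exact sum_range_pow_natAbs_sub_right r N

theorem sum_range_sum_range_pow_natAbs_sub {r : K} (hr : r ≠ 1) (N : ℕ) :
    ∑ i ∈ range N, ∑ j ∈ range N, r ^ ((i : ℤ) - j).natAbs
      = (N - N * r ^ 2 - 2 * r + 2 * r ^ (N + 1)) / (1 - r) ^ 2 := by
  induction N with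
  | zero => simp
  | succ N ih =>
    have step : ∑ i ∈ range (N + 1), ∑ j ∈ range (N + 1), r ^ ((i : ℤ) - j).natAbs
        = ∑ i ∈ range N, ∑ j ∈ range N, r ^ ((i : ℤ) - j).natAbs
          + 2 * r * ∑ i ∈ range N, r ^ i + 1 := by
      simp only [sum_range_succ, sum_add_distrib, sum_range_pow_natAbs_sub_right,
        sum_range_pow_natAbs_sub_left, sub_self, Int.natAbs_zero, pow_zero]
      ring
    rw [step, ih, geom_sum_eq hr]
    field_simp
    push_cast
    ring

end PowNatAbsSub

theorem exp_mul_abs_natCast_sub (x : ℝ) (i j : ℕ) :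
    exp (x * |(i : ℝ) - j|) = exp x ^ ((i : ℤ) - j).natAbs := by
  rw [← exp_nat_mul, Nat.cast_natAbs, Int.cast_abs, mul_comm]
  push_cast
  rfl

/-- Double sum of the exponential correlation kernel `e^{-(θ/N)|i-j|}`
over `i, j ∈ {1, …, N}`. -/
theorem sum_exp_correlation_kernel (N : ℕ) (hN : 1 ≤ N) (θ : ℝ) (hθ : 0 < θ) :
    ∑ i ∈ Finset.Icc 1 N, ∑ j ∈ Finset.Icc 1 N,
        Real.exp (-(θ / N) * |(i : ℝ) - (j : ℝ)|)
      = ((N : ℝ) * Real.exp (-(θ / N)) - (N : ℝ) * Real.exp (θ / N)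
          + 2 - 2 * Real.exp (-θ))
        / ((1 - Real.exp (θ / N)) * (1 - Real.exp (-(θ / N)))) := by
  set r := exp (-(θ / N))
  have hr1 : r ≠ 1 := by
    rw [Ne, exp_eq_one_iff, neg_eq_zero]
    positivity
  have hrN : exp (-θ) = r ^ N := by
    rw [← exp_nat_mul]
    field_simp
  have hr_inv : exp (θ / N) = r⁻¹ := by rw [← exp_neg, neg_neg]
  simp only [sum_Icc_one_eq_sum_range, exp_mul_abs_natCast_sub]
  push_cast
  simp only [add_sub_add_right_eq_sub]
  rw [sum_range_sum_range_pow_natAbs_sub hr1, hrN, hr_inv]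
  have hr0 : r ≠ 0 := (exp_pos _).ne'
  have h1r : 1 - r ≠ 0 := sub_ne_zero.mpr hr1.symm
  field_simp
  ring
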